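/- If p, q ∈ (0,1) satisfy p + q > 1, then G(p) + G(q) > 1. -/

import Mathlib

noncomputable def G (x : ℝ) : ℝ := x^4 * (15 - 4*x - 10*x^2 / (1 - 2*x*(1-x)))

/-!
Exchanging the roles of server and receiver gives `G x + G (1 - x) = 1`, and
`G' x = 20 x³ (1 - x)³ (3 - 4x(1 - x)) / (1 - 2x(1 - x))²` is positive on `(0, 1)`, so `G` is
strictly increasing on `[0, 1]`. Hence `p + q > 1` gives `G q > G (1 - p) = 1 - G p`.
-/

lemma one_sub_two_mul_mul_one_sub_pos (x : ℝ) : 0 < 1 - 2*x*(1-x) := by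
  nlinarith [sq_nonneg (2*x - 1)]

lemma G_add_G_one_sub (x : ℝ) : G x + G (1 - x) = 1 := by
  have hsymm : 1 - 2*(1-x)*(1-(1-x)) = 1 - 2*x*(1-x) := by ring
  rw [G, G, hsymm]
  have hd := (one_sub_two_mul_mul_one_sub_pos x).ne'
  set d := 1 - 2*x*(1-x) with hd_def
  field_simp
  rw [hd_def]
  ring

lemma hasDerivAt_G (x : ℝ) :
    HasDerivAt G (20 * x^3 * (1-x)^3 * (3 - 4*x*(1-x)) / (1 - 2*x*(1-x))^2) x := by
  have hd := (one_sub_two_mul_mul_one_sub_pos x).ne'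
  have hdenom : HasDerivAt (fun y : ℝ => 1 - 2*y*(1-y)) (4*x - 2) x := by
    refine (((hasDerivAt_id x).const_mul 2).mul ((hasDerivAt_id x).const_sub 1)).const_sub 1
      |>.congr_deriv ?_
    simp only [id, mul_one]
    ring
  refine ((hasDerivAt_pow 4 x).mul (((hasDerivAt_id x).const_mul 4).const_sub 15 |>.sub
    (((hasDerivAt_pow 2 x).const_mul 10).div hdenom hd))).congr_deriv ?_
  simp only [Pi.sub_apply, Pi.div_apply, id]
  set d := 1 - 2*x*(1-x) with hd_def
  field_simp
  rw [hd_def]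
  ring

lemma strictMonoOn_G : StrictMonoOn G (Set.Icc 0 1) := by
  refine strictMonoOn_of_hasDerivWithinAt_pos (convex_Icc 0 1)
    (fun x _ => (hasDerivAt_G x).continuousAt.continuousWithinAt)
    (fun x _ => (hasDerivAt_G x).hasDerivWithinAt) ?_
  rw [interior_Icc]
  rintro x ⟨hx0, hx1⟩
  have h1x : 0 < 1 - x := sub_pos.2 hx1
  have hnum : 0 < 3 - 4*x*(1-x) := by nlinarith [sq_nonneg (2*x - 1)]
  have hdenom := one_sub_two_mul_mul_one_sub_pos x
  positivity

theorem G_sum_gt_one (p q : ℝ) (hp : p ∈ Set.Ioo (0:ℝ) 1) (hq : q ∈ Set.Ioo (0:ℝ) 1)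
    (hpq : p + q > 1) : G p + G q > 1 := by
  have hlt : G (1 - p) < G q :=
    strictMonoOn_G ⟨by linarith [hp.2], by linarith [hp.1]⟩ (Set.Ioo_subset_Icc_self hq)
      (by linarith)
  linarith [G_add_G_one_sub p]
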